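/- arXiv:2103.07375 — 2 statements merged into one kernel-verified Lean document; each statement's English description precedes it below -/
import Mathlib

section
/- There exists a non-planar connected graph G with edge dimension edim(G) = 2. -/
open Finset
open scoped Classical

variable {V : Type*}

/-- Distance from a vertex to an edge: minimum distance to an endpoint. -/
noncomputable def SimpleGraph.edgeDist (G : SimpleGraph V) (e : Sym2 V) (v : V) : ℕ :=
  Sym2.lift ⟨fun a b => min (G.dist a v) (G.dist b v), fun a b => min_comm _ _⟩ e

/-- A set of vertices is an edge resolving set if every pair of distinct edges
is distinguished by some vertex of the set. -/
def SimpleGraph.IsEdgeResolvingSet (G : SimpleGraph V) (S : Set V) : Prop :=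
  ∀ e₁ ∈ G.edgeSet, ∀ e₂ ∈ G.edgeSet, e₁ ≠ e₂ →
    ∃ s ∈ S, G.edgeDist e₁ s ≠ G.edgeDist e₂ s

/-- The edge dimension: minimum cardinality of an edge resolving set. -/
noncomputable def SimpleGraph.edim (G : SimpleGraph V) [Fintype V] : ℕ :=
  sInf {n | ∃ S : Finset V, G.IsEdgeResolvingSet ↑S ∧ S.card = n}

/-- An edge resolving function: a `[0,1]`-valued weighting of the vertices such
that every pair of distinct edges is resolved by total weight at least 1. -/
def SimpleGraph.IsEdgeResolvingFunction (G : SimpleGraph V) [Fintype V] (g : V → ℝ) : Prop :=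
  (∀ v, 0 ≤ g v ∧ g v ≤ 1) ∧
  ∀ e₁ ∈ G.edgeSet, ∀ e₂ ∈ G.edgeSet, e₁ ≠ e₂ →
    1 ≤ ∑ z ∈ Finset.univ.filter (fun z => G.edgeDist e₁ z ≠ G.edgeDist e₂ z), g z

/-- The fractional edge dimension. -/
noncomputable def SimpleGraph.edimf (G : SimpleGraph V) [Fintype V] : ℝ :=
  sInf {x | ∃ g : V → ℝ, G.IsEdgeResolvingFunction g ∧ ∑ v, g v = x}

/-- `H` is a minor of `G`: there are disjoint connected branch sets in `G`,
one for each vertex of `H`, with edges of `H` witnessed by edges of `G`. -/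
def SimpleGraph.IsMinorOf {W : Type*} (H : SimpleGraph W) (G : SimpleGraph V) : Prop :=
  ∃ B : W → Set V, (∀ w, (G.induce (B w)).Connected) ∧
    (Pairwise fun w w' => Disjoint (B w) (B w')) ∧
    ∀ ⦃w w'⦄, H.Adj w w' → ∃ a ∈ B w, ∃ b ∈ B w', G.Adj a b

/-!
The graph is `K_{3,3}` with parts `{0, 1, 2}` and `{3, 4, 5}` in which the edges `1–4`, `1–5` and
`2–5` are subdivided twice and `2–3` three times, so contracting the subdivision paths recovers
`K_{3,3}`. Every vertex has degree at least 2, so a single vertex sees two of its edges at distance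
0 and resolves nothing. The vertices 8 and 14 resolve all 18 edges: their distance vectors are
certified by the local conditions of breadth-first search, and the resulting pairs of edge
distances are checked to be distinct.
-/

namespace SimpleGraph

variable {V : Type*} {G : SimpleGraph V}

theorem edgeDist_mk (a b v : V) : G.edgeDist s(a, b) v = min (G.dist a v) (G.dist b v) := rfl

theorem edgeDist_eq_zero_of_mem {e : Sym2 V} {v : V} (hv : v ∈ e) : G.edgeDist e v = 0 := by
  obtain ⟨w, rfl⟩ := Sym2.mem_iff_exists.1 hv
  simp [edgeDist_mk]

theorem two_le_card_of_isEdgeResolvingSet [Fintype V] [DecidableRel G.Adj] [Nonempty V]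
    (hdeg : ∀ v, 2 ≤ G.degree v) {S : Finset V} (hS : G.IsEdgeResolvingSet S) : 2 ≤ S.card := by
  by_contra! hcard
  obtain ⟨v, hSv⟩ := Finset.card_le_one_iff_subset_singleton.1 (Nat.le_of_lt_succ hcard)
  obtain ⟨a, ha, b, hb, hab⟩ := Finset.one_lt_card.1 (hdeg v)
  obtain ⟨t, ht, hne⟩ := hS s(v, a) (by simpa using ha) s(v, b) (by simpa using hb)
    (mt Sym2.congr_right.1 hab)
  rw [Finset.mem_singleton.1 (hSv ht), edgeDist_eq_zero_of_mem (Sym2.mem_mk_left v a),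
    edgeDist_eq_zero_of_mem (Sym2.mem_mk_left v b)] at hne
  exact hne rfl

theorem edim_eq [Fintype V] {S : Finset V} {k : ℕ} (hS : G.IsEdgeResolvingSet S)
    (hk : S.card = k) (hmin : ∀ T : Finset V, G.IsEdgeResolvingSet T → k ≤ T.card) : G.edim = k :=
  le_antisymm (Nat.sInf_le ⟨S, hS, hk⟩) (le_csInf ⟨k, S, hS, hk⟩ (by
    rintro _ ⟨T, hT, rfl⟩
    exact hmin T hT))

structure IsDistLabelling (G : SimpleGraph V) (s : V) (d : V → ℕ) : Prop where
  apex : d s = 0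
  exists_adj_succ : ∀ v ≠ s, ∃ c, G.Adj v c ∧ d c + 1 = d v
  le_succ_of_adj : ∀ ⦃v c⦄, G.Adj v c → d v ≤ d c + 1

namespace IsDistLabelling

variable {s : V} {d : V → ℕ}

theorem exists_walk_length_eq (hd : G.IsDistLabelling s d) :
    ∀ (n : ℕ) (v : V), d v = n → ∃ w : G.Walk v s, w.length = n
  | 0, v, hv => by
    obtain rfl : v = s := by
      by_contra hvs
      obtain ⟨c, -, hc⟩ := hd.exists_adj_succ v hvs
      omega
    exact ⟨.nil, rfl⟩
  | n + 1, v, hv => by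
    have hvs : v ≠ s := by
      rintro rfl
      simp [hd.apex] at hv
    obtain ⟨c, hvc, hc⟩ := hd.exists_adj_succ v hvs
    obtain ⟨w, hw⟩ := exists_walk_length_eq hd n c (by omega)
    exact ⟨.cons hvc w, by simp [hw]⟩

theorem le_length (hd : G.IsDistLabelling s d) {v : V} (w : G.Walk v s) : d v ≤ w.length := by
  induction w with
  | nil => simp [hd.apex]
  | cons hvc _ ih =>
    rw [Walk.length_cons]
    exact (hd.le_succ_of_adj hvc).trans (Nat.succ_le_succ (ih hd))

theorem reachable (hd : G.IsDistLabelling s d) (v : V) : G.Reachable v s :=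
  (hd.exists_walk_length_eq _ v rfl).elim fun w _ => ⟨w⟩

theorem dist_eq (hd : G.IsDistLabelling s d) (v : V) : G.dist v s = d v := by
  obtain ⟨w, hw⟩ := hd.exists_walk_length_eq _ v rfl
  obtain ⟨w', hw'⟩ := (hd.reachable v).exists_walk_length_eq_dist
  exact le_antisymm (hw ▸ dist_le w) (hw' ▸ hd.le_length w')

theorem connected (hd : G.IsDistLabelling s d) : G.Connected :=
  (connected_iff_exists_forall_reachable _).2 ⟨s, fun v => (hd.reachable v).symm⟩

end IsDistLabelling

end SimpleGraph

namespace K33Subdivision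

open SimpleGraph

def edges : List (Fin 15 × Fin 15) :=
  [(0, 3), (0, 4), (0, 5), (1, 3), (1, 6), (6, 7), (7, 4), (1, 8), (8, 9), (9, 5),
    (2, 4), (2, 10), (10, 11), (11, 12), (12, 3), (2, 13), (13, 14), (14, 5)]

def graph : SimpleGraph (Fin 15) := fromRel fun a b => (a, b) ∈ edges

instance : DecidableRel graph.Adj := by unfold graph; infer_instance

theorem exists_mem_edges {e : Sym2 (Fin 15)} (he : e ∈ graph.edgeSet) :
    ∃ p ∈ edges, e = s(p.1, p.2) := by
  induction e using Sym2.ind with | _ a b =>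
  rw [mem_edgeSet, graph, fromRel_adj] at he
  rcases he.2 with h | h
  · exact ⟨(a, b), h, rfl⟩
  · exact ⟨(b, a), h, Sym2.eq_swap⟩

def distTo8 : Fin 15 → ℕ := ![3, 1, 5, 2, 4, 2, 2, 3, 0, 1, 5, 4, 3, 4, 3]

def distTo14 : Fin 15 → ℕ := ![2, 4, 2, 3, 3, 1, 5, 4, 3, 2, 3, 4, 4, 1, 0]

theorem isDistLabelling_distTo8 : graph.IsDistLabelling 8 distTo8 :=
  ⟨by decide, by decide, by decide⟩

theorem isDistLabelling_distTo14 : graph.IsDistLabelling 14 distTo14 :=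
  ⟨by decide, by decide, by decide⟩

set_option maxRecDepth 2000 in
theorem isEdgeResolvingSet_pair : graph.IsEdgeResolvingSet ↑({8, 14} : Finset (Fin 15)) := by
  have key : ∀ p ∈ edges, ∀ q ∈ edges, p ≠ q →
      min (distTo8 p.1) (distTo8 p.2) ≠ min (distTo8 q.1) (distTo8 q.2) ∨
        min (distTo14 p.1) (distTo14 p.2) ≠ min (distTo14 q.1) (distTo14 q.2) := by
    decide
  intro e₁ he₁ e₂ he₂ hne
  obtain ⟨p, hp, rfl⟩ := exists_mem_edges he₁
  obtain ⟨q, hq, rfl⟩ := exists_mem_edges he₂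
  rcases key p hp q hq (by rintro rfl; exact hne rfl) with h | h
  · refine ⟨8, by simp, ?_⟩
    simpa only [edgeDist_mk, isDistLabelling_distTo8.dist_eq] using h
  · refine ⟨14, by simp, ?_⟩
    simpa only [edgeDist_mk, isDistLabelling_distTo14.dist_eq] using h

theorem edim_eq_two : graph.edim = 2 := by
  have two_le_degree : ∀ v, 2 ≤ graph.degree v := by decide
  exact edim_eq isEdgeResolvingSet_pair rfl fun T hT =>
    two_le_card_of_isEdgeResolvingSet two_le_degree hT

def branchSet : Fin 3 ⊕ Fin 3 → Finset (Fin 15) :=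
  Sum.elim ![{0}, {1, 6, 7, 8, 9}, {2, 10, 11, 12, 13, 14}] ![{3}, {4}, {5}]

theorem completeBipartiteGraph_isMinorOf :
    (completeBipartiteGraph (Fin 3) (Fin 3)).IsMinorOf graph := by
  refine ⟨fun w => branchSet w, ?_, ?_, ?_⟩
  · decide
  · have : ∀ w w', w ≠ w' → Disjoint (branchSet w) (branchSet w') := by decide
    exact fun w w' h => Finset.disjoint_coe.2 (this w w' h)
  · have cross : ∀ i j, ∃ a ∈ branchSet (.inl i), ∃ b ∈ branchSet (.inr j), graph.Adj a b := by
      decide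
    rintro (i | i) (j | j) h
    · simp at h
    · obtain ⟨a, ha, b, hb, hab⟩ := cross i j
      exact ⟨a, ha, b, hb, hab⟩
    · obtain ⟨a, ha, b, hb, hab⟩ := cross j i
      exact ⟨b, hb, a, ha, hab.symm⟩
    · simp at h

end K33Subdivision

/-- There exists a non-planar (by Wagner's theorem: containing a `K₅` or `K_{3,3}` minor)
connected graph with edge dimension 2. -/
theorem stmt_5 :
    ∃ (n : ℕ) (G : SimpleGraph (Fin n)), G.Connected ∧
      ((⊤ : SimpleGraph (Fin 5)).IsMinorOf G ∨
        (completeBipartiteGraph (Fin 3) (Fin 3)).IsMinorOf G) ∧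
      G.edim = 2 :=
  ⟨15, K33Subdivision.graph, K33Subdivision.isDistLabelling_distTo8.connected,
    .inr K33Subdivision.completeBipartiteGraph_isMinorOf, K33Subdivision.edim_eq_two⟩
end

section
/- If G is a connected graph of order n ≥ 3 such that every vertex has a twin distinct from itself (i.e., the vertex set partitions into twin equivalence classes each of size at least 2, or G = K_n), then edim_f(G) = n/2. -/
open Finset
open scoped Classical

variable {V : Type*}

/-!
Twins `x ≠ y` are resolved only by `x` and `y`: for a neighbour `w` of both, every other vertex
is equally far from the edges `xw` and `yw`, so an edge resolving function has
`g x + g y ≥ 1`. Vertices of weight `< 1/2` are therefore pairwise non-twins, so choosing a twin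
for each vertex maps them injectively into the vertices of weight `≥ 1/2`, and pairing them off
gives `∑ g ≥ n/2`. Conversely, the constant `1/2` is edge resolving in every connected graph: each
of two distinct edges has an endpoint off the other edge, at distance `0` from the first and
positive distance from the second.
-/

theorem card_div_two_le_sum_of_equivalence {α : Type*} [Fintype α] {r : α → α → Prop}
    (hr : Equivalence r) (hpartner : ∀ a, ∃ b, b ≠ a ∧ r a b) {g : α → ℝ}
    (hg : ∀ a b, a ≠ b → r a b → 1 ≤ g a + g b) :
    (Fintype.card α : ℝ) / 2 ≤ ∑ a, g a := by
  choose t ht_ne ht_rel using hpartner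
  have hpair : ∀ a, 1 ≤ g a + g (t a) := fun a => hg a (t a) (ht_ne a).symm (ht_rel a)
  set L := univ.filter fun a => g a < 1 / 2
  set H := univ.filter fun a => ¬g a < 1 / 2
  have hinj : Set.InjOn t L := by
    intro a ha b hb hab
    by_contra hne
    have := hg a b hne (hr.trans (ht_rel a) (hab ▸ hr.symm (ht_rel b)))
    simp only [L, coe_filter, mem_univ, true_and, Set.mem_ofPred_eq] at ha hb
    linarith
  have himage : L.image t ⊆ H := by
    refine image_subset_iff.mpr fun a ha => ?_
    simp only [L, H, mem_filter, mem_univ, true_and] at ha ⊢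
    linarith [hpair a]
  have hH : ∑ b ∈ L.image t, (g b - 1 / 2) ≤ ∑ b ∈ H, (g b - 1 / 2) := by
    refine sum_le_sum_of_subset_of_nonneg himage fun b hb _ => ?_
    simp only [H, mem_filter, mem_univ, true_and, not_lt] at hb
    linarith
  suffices 0 ≤ ∑ a, (g a - 1 / 2) by
    rw [sum_sub_distrib, sum_const, card_univ, nsmul_eq_mul] at this
    linarith
  calc (0 : ℝ) ≤ ∑ a ∈ L, ((g a - 1 / 2) + (g (t a) - 1 / 2)) :=
        sum_nonneg fun a _ => by linarith [hpair a]
    _ = ∑ a ∈ L, (g a - 1 / 2) + ∑ b ∈ L.image t, (g b - 1 / 2) := by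
        rw [sum_add_distrib, sum_image hinj]
    _ ≤ ∑ a ∈ L, (g a - 1 / 2) + ∑ b ∈ H, (g b - 1 / 2) := by linarith
    _ = ∑ a, (g a - 1 / 2) := sum_filter_add_sum_filter_not _ _ _

theorem Sym2.exists_mem_notMem_of_ne {e₁ e₂ : Sym2 V} (h : ¬e₁.IsDiag) (hne : e₁ ≠ e₂) :
    ∃ u ∈ e₁, u ∉ e₂ := by
  induction e₁ using Sym2.ind with
  | _ a b =>
    by_contra! hmem
    exact hne ((Sym2.mem_and_mem_iff h).mp ⟨hmem a (by simp), hmem b (by simp)⟩).symm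

namespace SimpleGraph

variable {G : SimpleGraph V} {x y z : V}

def IsTwin (G : SimpleGraph V) (x y : V) : Prop :=
  G.neighborSet x \ {y} = G.neighborSet y \ {x}

lemma isTwin_iff : G.IsTwin x y ↔ ∀ z, z ≠ x → z ≠ y → (G.Adj x z ↔ G.Adj y z) := by
  refine ⟨fun h z hzx hzy => ?_, fun h => ?_⟩
  · simpa [hzx, hzy] using Set.ext_iff.mp h z
  · ext z
    by_cases hzx : z = x
    · subst hzx; simp
    by_cases hzy : z = y
    · subst hzy; simp
    simpa [hzx, hzy] using h z hzx hzy

lemma IsTwin.adj_iff (h : G.IsTwin x y) (hzx : z ≠ x) (hzy : z ≠ y) : G.Adj x z ↔ G.Adj y z :=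
  isTwin_iff.mp h z hzx hzy

lemma isTwin_equivalence : Equivalence G.IsTwin where
  refl _ := rfl
  symm := Eq.symm
  trans {x y w} hxy hyw := by
    rcases eq_or_ne x y with rfl | hxy'
    · exact hyw
    rcases eq_or_ne y w with rfl | hyw'
    · exact hxy
    rcases eq_or_ne x w with rfl | hxw
    · rfl
    refine isTwin_iff.mpr fun z hzx hzw => ?_
    rcases eq_or_ne z y with rfl | hzy
    · rw [adj_comm, hyw.adj_iff hxy' hxw, adj_comm, hxy.adj_iff hxw.symm hyw'.symm, adj_comm]
    · exact (hxy.adj_iff hzx hzy).trans (hyw.adj_iff hzy hzw)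

lemma IsTwin.dist_le (hG : G.Connected) (h : G.IsTwin x y) (hzx : z ≠ x) (hzy : z ≠ y) :
    G.dist y z ≤ G.dist x z := by
  obtain ⟨p, hp⟩ := hG.exists_walk_length_eq_dist x z
  cases p with
  | nil => exact absurd rfl hzx
  | @cons _ u _ hxu q =>
    rw [← hp, Walk.length_cons]
    rcases eq_or_ne u y with rfl | huy
    · exact (SimpleGraph.dist_le q).trans (Nat.le_succ _)
    · exact SimpleGraph.dist_le (Walk.cons ((h.adj_iff hxu.ne' huy).mp hxu) q)

lemma IsTwin.dist_eq (hG : G.Connected) (h : G.IsTwin x y) (hzx : z ≠ x) (hzy : z ≠ y) :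
    G.dist x z = G.dist y z :=
  le_antisymm ((isTwin_equivalence.symm h).dist_le hG hzy hzx) (h.dist_le hG hzx hzy)

lemma IsTwin.exists_adj_ne [Fintype V] (hG : G.Connected) (hn : 3 ≤ Fintype.card V)
    (h : G.IsTwin x y) : ∃ w, G.Adj x w ∧ w ≠ y := by
  obtain ⟨z, -, hz⟩ := exists_mem_notMem_of_card_lt_card (s := {x, y}) (t := univ)
    ((card_le_two).trans_lt (by rwa [card_univ]))
  obtain ⟨d, -, hd, hd'⟩ := (hG x z).some.exists_boundary_dart {x, y} (by simp) (by simpa using hz)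
  simp only [Set.mem_insert_iff, Set.mem_singleton_iff, not_or] at hd hd'
  rcases hd with hx | hy
  · exact ⟨d.snd, hx ▸ d.adj, hd'.2⟩
  · exact ⟨d.snd, (h.adj_iff hd'.1 hd'.2).mpr (hy ▸ d.adj), hd'.2⟩

lemma IsTwin.edgeDist_eq (hG : G.Connected) (h : G.IsTwin x y) (hzx : z ≠ x) (hzy : z ≠ y)
    (w : V) : G.edgeDist s(x, w) z = G.edgeDist s(y, w) z :=
  congrArg (min · _) (h.dist_eq hG hzx hzy)

lemma edgeDist_eq_zero_iff (hG : G.Connected) {e : Sym2 V} : G.edgeDist e z = 0 ↔ z ∈ e := by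
  induction e using Sym2.ind with
  | _ a b =>
    simp only [edgeDist, Sym2.lift_mk, Sym2.mem_iff]
    rw [Nat.min_eq_zero_iff, hG.dist_eq_zero_iff, hG.dist_eq_zero_iff, eq_comm, @eq_comm _ b]

lemma edgeDist_ne_of_mem_of_notMem (hG : G.Connected) {e e' : Sym2 V} (h : z ∈ e) (h' : z ∉ e') :
    G.edgeDist e z ≠ G.edgeDist e' z := fun heq =>
  h' ((edgeDist_eq_zero_iff hG).mp (heq ▸ (edgeDist_eq_zero_iff hG).mpr h))

lemma IsEdgeResolvingFunction.one_le_add_of_isTwin [Fintype V] {g : V → ℝ}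
    (hg : G.IsEdgeResolvingFunction g) (hG : G.Connected) (hn : 3 ≤ Fintype.card V)
    (h : G.IsTwin x y) (hxy : x ≠ y) : 1 ≤ g x + g y := by
  obtain ⟨w, hxw, hwy⟩ := h.exists_adj_ne hG hn
  have hyw : G.Adj y w := (h.adj_iff hxw.ne' hwy).mp hxw
  have hne : s(x, w) ≠ s(y, w) := by simp [hxy, hxw.ne]
  have hsub : univ.filter (fun z => G.edgeDist s(x, w) z ≠ G.edgeDist s(y, w) z) ⊆ {x, y} := by
    intro z hz
    by_contra hzxy
    simp only [mem_insert, mem_singleton, not_or] at hzxy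
    exact (mem_filter.mp hz).2 (h.edgeDist_eq hG hzxy.1 hzxy.2 w)
  calc 1 ≤ _ := hg.2 _ hxw _ hyw hne
    _ ≤ ∑ z ∈ {x, y}, g z := sum_le_sum_of_subset_of_nonneg hsub fun z _ _ => (hg.1 z).1
    _ = g x + g y := sum_pair hxy

lemma isEdgeResolvingFunction_const_half [Fintype V] (hG : G.Connected) :
    G.IsEdgeResolvingFunction fun _ => 1 / 2 := by
  refine ⟨fun _ => by norm_num, fun e₁ he₁ e₂ he₂ hne => ?_⟩
  obtain ⟨u, hu₁, hu₂⟩ := Sym2.exists_mem_notMem_of_ne (G.not_isDiag_of_mem_edgeSet he₁) hne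
  obtain ⟨v, hv₂, hv₁⟩ := Sym2.exists_mem_notMem_of_ne (G.not_isDiag_of_mem_edgeSet he₂) hne.symm
  have huv : u ≠ v := by rintro rfl; exact hu₂ hv₂
  have hsub : {u, v} ⊆ univ.filter fun z => G.edgeDist e₁ z ≠ G.edgeDist e₂ z := by
    refine insert_subset_iff.mpr ⟨?_, singleton_subset_iff.mpr ?_⟩ <;>
      simp only [mem_filter, mem_univ, true_and]
    · exact edgeDist_ne_of_mem_of_notMem hG hu₁ hu₂
    · exact (edgeDist_ne_of_mem_of_notMem hG hv₂ hv₁).symm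
  calc (1 : ℝ) = ∑ z ∈ {u, v}, 1 / 2 := by rw [sum_pair huv]; norm_num
    _ ≤ _ := sum_le_sum_of_subset_of_nonneg hsub fun _ _ _ => by norm_num

end SimpleGraph

/-- If every vertex of a connected graph `G` of order `n ≥ 3` has a twin distinct
from itself, then `edim_f(G) = n/2`. -/
theorem stmt_19 [Fintype V] (G : SimpleGraph V) (hG : G.Connected)
    (hn : 3 ≤ Fintype.card V)
    (htwin : ∀ v : V, ∃ w : V, w ≠ v ∧
      G.neighborSet v \ {w} = G.neighborSet w \ {v}) :
    G.edimf = (Fintype.card V : ℝ) / 2 := by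
  refine IsLeast.csInf_eq
    ⟨⟨fun _ => 1 / 2, SimpleGraph.isEdgeResolvingFunction_const_half hG, ?_⟩, ?_⟩
  · rw [sum_const, card_univ, nsmul_eq_mul]
    ring
  · rintro _ ⟨g, hg, rfl⟩
    exact card_div_two_le_sum_of_equivalence SimpleGraph.isTwin_equivalence htwin
      fun _ _ hxy h => hg.one_le_add_of_isTwin hG hn h hxy
end
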